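/- arXiv:2511.19178 — 5 statements merged into one kernel-verified Lean document; each statement's English description precedes it below -/
import Mathlib

section
/- Let 𝛚, a ∈ ℝ³ with 𝛚 ≠ 0 and ⟨𝛚,a⟩ = 0. Then for every τ ∈ ℝ, exp(τ[𝛚]×) a = cos(τ|𝛚|)·a + (sin(τ|𝛚|)/|𝛚|)·(𝛚 × a) (Rodrigues rotation formula for an axis orthogonal to a). -/
noncomputable section

open scoped RealInnerProductSpace

/-- `ℝ³` with the Euclidean inner product. -/
abbrev E3 := EuclideanSpace ℝ (Fin 3)

/-- The cross product on `ℝ³`. -/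
def cross3 (u v : E3) : E3 :=
  (WithLp.equiv 2 (Fin 3 → ℝ)).symm
    (crossProduct ((WithLp.equiv 2 (Fin 3 → ℝ)) u) ((WithLp.equiv 2 (Fin 3 → ℝ)) v))

/-- The skew-symmetric operator `[u]× : v ↦ u × v` as a continuous linear map. -/
def skewCLM (u : E3) : E3 →L[ℝ] E3 :=
  LinearMap.toContinuousLinearMap <|
    (WithLp.linearEquiv 2 ℝ (Fin 3 → ℝ)).symm.toLinearMap ∘ₗ
      (crossProduct ((WithLp.equiv 2 (Fin 3 → ℝ)) u)) ∘ₗ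
        (WithLp.linearEquiv 2 ℝ (Fin 3 → ℝ)).toLinearMap

/-- The rotation `exp (t [u]×)` about the axis `u` by the angle `t ‖u‖`. -/
def rot (u : E3) (t : ℝ) : E3 →L[ℝ] E3 :=
  NormedSpace.exp (t • skewCLM u)


lemma skew_apply (u v : E3) : skewCLM u v = cross3 u v := rfl

lemma skew_skew (ω a : E3) (horth : ⟪ω, a⟫ = 0) :
    skewCLM ω (cross3 ω a) = (-(‖ω‖^2)) • a := by
  have h : ω 0 * a 0 + ω 1 * a 1 + ω 2 * a 2 = 0 := by
    have := horth
    simp [PiLp.inner_apply, Fin.sum_univ_three] at this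
    linear_combination this
  have hn : ‖ω‖^2 = ω 0 ^ 2 + ω 1 ^ 2 + ω 2 ^ 2 := by
    rw [EuclideanSpace.norm_eq, Real.sq_sqrt (by positivity)]
    simp [Fin.sum_univ_three]
  ext i
  fin_cases i
  · simp [skew_apply, cross3, cross_apply, hn, PiLp.smul_apply, smul_eq_mul]
    linear_combination (ω 0) * h
  · simp [skew_apply, cross3, cross_apply, hn, PiLp.smul_apply, smul_eq_mul]
    linear_combination (ω 1) * h
  · simp [skew_apply, cross3, cross_apply, hn, PiLp.smul_apply, smul_eq_mul]
    linear_combination (ω 2) * h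

/-- Rodrigues rotation formula for an axis orthogonal to `a`:
`exp (τ[𝛚]×) a = cos(τ‖𝛚‖) a + (sin(τ‖𝛚‖)/‖𝛚‖) (𝛚 × a)`. -/
theorem rodrigues (ω a : E3) (hω : ω ≠ 0) (horth : ⟪ω, a⟫ = 0) (τ : ℝ) :
    rot ω τ a = Real.cos (τ * ‖ω‖) • a + (Real.sin (τ * ‖ω‖) / ‖ω‖) • cross3 ω a := by
  set A := skewCLM ω with hA
  set c := cross3 ω a with hc
  have hnω : ‖ω‖ ≠ 0 := norm_ne_zero_iff.mpr hω
  set f : ℝ → E3 := fun t => rot ω t a with hf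
  set g : ℝ → E3 := fun t => Real.cos (t * ‖ω‖) • a + (Real.sin (t * ‖ω‖) / ‖ω‖) • c with hg
  have hf' : ∀ t : ℝ, HasDerivAt f (A (f t)) t := by
    intro t
    have h1 := (hasDerivAt_exp_smul_const' (𝕂 := ℝ) A t).clm_apply (hasDerivAt_const t a)
    simpa [hf, rot, ContinuousLinearMap.mul_apply] using h1
  have hg' : ∀ t : ℝ, HasDerivAt g (A (g t)) t := by
    intro t
    have hc1 : HasDerivAt (fun s : ℝ => Real.cos (s * ‖ω‖)) (-Real.sin (t * ‖ω‖) * ‖ω‖) t :=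
      by have := (Real.hasDerivAt_cos (t * ‖ω‖)).comp t (hasDerivAt_mul_const (x := t) ‖ω‖); exact this
    have hs1 : HasDerivAt (fun s : ℝ => Real.sin (s * ‖ω‖) / ‖ω‖)
        (Real.cos (t * ‖ω‖) * ‖ω‖ / ‖ω‖) t :=
      by have := ((Real.hasDerivAt_sin (t * ‖ω‖)).comp t (hasDerivAt_mul_const (x := t) ‖ω‖)).div_const ‖ω‖; exact this
    have hd := (hc1.smul_const a).add (hs1.smul_const c)
    have heq : (-Real.sin (t * ‖ω‖) * ‖ω‖) • a + (Real.cos (t * ‖ω‖) * ‖ω‖ / ‖ω‖) • c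
        = A (g t) := by
      rw [hg]
      simp only [map_add, map_smul]
      rw [skew_apply ω a, ← hc, skew_skew ω a horth, smul_smul]
      rw [add_comm]
      congr 1
      · congr 1; field_simp
      · congr 1; field_simp
    rw [heq] at hd
    exact hd
  have h0 : f 0 = g 0 := by
    show NormedSpace.exp ((0:ℝ) • skewCLM ω) a = _
    have hz : (0:ℝ) • skewCLM ω = 0 := by ext v; simp
    rw [hz, NormedSpace.exp_zero]
    simp [hg]
  have key : Set.EqOn f g (Set.Ioo (-(|τ|+1)) (|τ|+1)) := by
    apply ODE_solution_unique_of_mem_Ioo (v := fun _ x => A x) (s := fun _ => Set.univ)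
      (K := ‖A‖₊) (fun _ _ => A.lipschitz.lipschitzOnWith)
      (t₀ := 0)
      (by constructor <;> [linarith [abs_nonneg τ]; linarith [abs_nonneg τ]])
      (fun t _ => ⟨hf' t, trivial⟩) (fun t _ => ⟨hg' t, trivial⟩) h0
  have hτ : τ ∈ Set.Ioo (-(|τ|+1)) (|τ|+1) := by
    constructor <;> [linarith [neg_abs_le τ]; linarith [le_abs_self τ]]
  exact key hτ
end
end

section
/- Let a, e ∈ ℝ³ with |a| = 1 and ⟨a,e⟩ = 0, let v ∈ ℝ³ with ⟨v,a⟩ = 0, and set 𝛚 = a × v + e. Define x : ℝ → ℝ³ by x(t) = exp(−t[e]×)(exp(t[𝛚]×) a). Then: (i) x(0) = a and x'(0) = v; (ii) |x(t)| = 1 for all t; (iii) x satisfies the Euler–Lagrange equation of the rotating-frame Lagrangian L(x,ẋ) = ½|ẋ + e×x|² constrained to the sphere, namely x''(t) + 2 e × x'(t) + e × (e × x(t)) + |𝛚|² x(t) = 0 for all t ∈ ℝ. -/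
noncomputable section

open scoped RealInnerProductSpace

lemma skewCLM_apply (u w : E3) : skewCLM u w = cross3 u w := rfl

lemma cross3_apply (u w : E3) (i : Fin 3) :
    cross3 u w i = ![u 1 * w 2 - u 2 * w 1, u 2 * w 0 - u 0 * w 2, u 0 * w 1 - u 1 * w 0] i := by
  rfl

lemma inner_cross3_right (u w : E3) : ⟪cross3 u w, w⟫ = 0 := by
  simp [PiLp.inner_apply, Fin.sum_univ_three, cross3_apply]
  ring

lemma inner_cross3_left (u w : E3) : ⟪cross3 u w, u⟫ = 0 := by
  simp [PiLp.inner_apply, Fin.sum_univ_three, cross3_apply]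
  ring

lemma cross3_add_left (u u' w : E3) : cross3 (u + u') w = cross3 u w + cross3 u' w := by
  ext i
  fin_cases i <;>
    simp [cross3_apply, PiLp.add_apply] <;> ring

lemma cross3_cross3_self (u w : E3) :
    cross3 u (cross3 u w) = ⟪u, w⟫ • u - ⟪u, u⟫ • w := by
  ext i
  fin_cases i <;>
    simp [cross3_apply, PiLp.inner_apply, Fin.sum_univ_three, PiLp.sub_apply,
      PiLp.smul_apply, smul_eq_mul, EuclideanSpace.norm_sq_eq] <;> ring

lemma cross3_cross3_cancel (a v : E3) :
    cross3 (cross3 a v) a = ⟪a, a⟫ • v - ⟪a, v⟫ • a := by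
  ext i
  fin_cases i <;>
    simp [cross3_apply, PiLp.inner_apply, Fin.sum_univ_three, PiLp.sub_apply,
      PiLp.smul_apply, smul_eq_mul, EuclideanSpace.norm_sq_eq] <;> ring

lemma commute_smul (C : E3 →L[ℝ] E3) (t : ℝ) : Commute (t • C) C := by
  unfold Commute SemiconjBy
  ext z
  simp [ContinuousLinearMap.mul_apply, map_smul]

lemma exp_apply_comm (C : E3 →L[ℝ] E3) (t : ℝ) (z : E3) :
    NormedSpace.exp (t • C) (C z) = C (NormedSpace.exp (t • C) z) := by
  have h2 := (commute_smul C t).exp_left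
  have := DFunLike.congr_fun h2 z
  simpa [ContinuousLinearMap.mul_apply] using this

lemma hasDerivAt_expE (C : E3 →L[ℝ] E3) {w : ℝ → E3} {w' : E3} {t : ℝ}
    (hw : HasDerivAt w w' t) :
    HasDerivAt (fun s => NormedSpace.exp (s • C) (w s))
      (NormedSpace.exp (t • C) (C (w t) + w')) t := by
  have h := (hasDerivAt_exp_smul_const (𝕂 := ℝ) C t).clm_apply hw
  simpa [ContinuousLinearMap.mul_apply, map_add] using h

lemma exp_zero_apply (C : E3 →L[ℝ] E3) (w : E3) :
    NormedSpace.exp ((0 : ℝ) • C) w = w := by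
  have h0 : (0 : ℝ) • C = 0 := by ext z; simp
  rw [h0, NormedSpace.exp_zero, ContinuousLinearMap.one_apply]

lemma norm_exp_skewlike (C : E3 →L[ℝ] E3) (hC : ∀ z : E3, ⟪C z, z⟫ = 0) (t : ℝ) (w : E3) :
    ‖NormedSpace.exp (t • C) w‖ = ‖w‖ := by
  set g : ℝ → E3 := fun s => NormedSpace.exp (s • C) w with hg
  have hgd : ∀ s, HasDerivAt g (C (g s)) s := by
    intro s
    have h := hasDerivAt_expE C (hasDerivAt_const s w)
    simpa [exp_apply_comm] using h
  have hfd : ∀ s, HasDerivAt (fun s => ⟪g s, g s⟫) 0 s := by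
    intro s
    have h := HasDerivAt.inner (𝕜 := ℝ) (hgd s) (hgd s)
    have h1 : ⟪g s, C (g s)⟫ = 0 := by rw [real_inner_comm]; exact hC (g s)
    have h2 : ⟪C (g s), g s⟫ = 0 := hC (g s)
    simpa [h1, h2] using h
  have hconst : ⟪g t, g t⟫ = ⟪g 0, g 0⟫ :=
    is_const_of_deriv_eq_zero (fun s => (hfd s).differentiableAt)
      (fun s => (hfd s).deriv) t 0
  have hg0 : g 0 = w := exp_zero_apply C w
  have hsq : ‖g t‖ ^ 2 = ‖w‖ ^ 2 := by
    rw [← real_inner_self_eq_norm_sq, ← real_inner_self_eq_norm_sq, hconst, hg0]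
  nlinarith [norm_nonneg (g t), norm_nonneg w]


/-- The zero-potential trajectory `x(t) = exp(−t[e]×)(exp(t[𝛚]×)a)`, `𝛚 = a × v + e`, of the
restricted two-body problem on `S²` in the rotating frame: it starts at `a` with velocity `v`,
stays on the unit sphere, and satisfies the Euler–Lagrange equation of
`L(x,ẋ) = ½|ẋ + e×x|²` constrained to the sphere, with Lagrange multiplier `−‖𝛚‖²`. -/
theorem eulerLagrange_rotating_frame (a e v : E3) (ha : ‖a‖ = 1) (hae : ⟪a, e⟫ = 0)
    (hva : ⟪v, a⟫ = 0) :
    let ω : E3 := cross3 a v + e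
    let x : ℝ → E3 := fun t => rot e (-t) (rot ω t a)
    x 0 = a ∧ deriv x 0 = v ∧ (∀ t : ℝ, ‖x t‖ = 1) ∧
      ∀ t : ℝ,
        deriv (deriv x) t + (2 : ℝ) • cross3 e (deriv x t)
          + cross3 e (cross3 e (x t)) + ‖ω‖ ^ 2 • x t = 0 := by
  intro ω x
  set A := skewCLM ω with hA
  set D := -skewCLM e with hD
  have hωa : ⟪ω, a⟫ = 0 := by
    have h1 : ⟪cross3 a v, a⟫ = 0 := inner_cross3_left a v
    have h2 : ⟪e, a⟫ = 0 := by rw [real_inner_comm]; exact hae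
    show ⟪cross3 a v + e, a⟫ = 0
    rw [inner_add_left, h1, h2, add_zero]
  -- x in exponential form
  have hxdef : ∀ t : ℝ, x t = NormedSpace.exp (t • D)
      (NormedSpace.exp (t • A) a) := by
    intro t
    show rot e (-t) (rot ω t a) = _
    rw [rot, rot]
    congr 2
    rw [hD]
    ext z
    simp
  set y : ℝ → E3 := fun t => NormedSpace.exp (t • A) a with hy
  have hyd : ∀ t, HasDerivAt y (A (y t)) t := by
    intro t
    have h := hasDerivAt_expE A (hasDerivAt_const t a)
    simpa [exp_apply_comm] using h
  have hx' : ∀ t, HasDerivAt x (NormedSpace.exp (t • D) ((D + A) (y t))) t := by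
    intro t
    have hxf : x = fun t => NormedSpace.exp (t • D) (y t) := funext hxdef
    rw [hxf]
    have h := hasDerivAt_expE D (hyd t)
    simpa [ContinuousLinearMap.add_apply] using h
  have hderivx : ∀ t, deriv x t = NormedSpace.exp (t • D) ((D + A) (y t)) :=
    fun t => (hx' t).deriv
  have hzd : ∀ t, HasDerivAt (fun s => (D + A) (y s)) ((D + A) (A (y t))) t := by
    intro t
    simpa using (hasDerivAt_const t (D + A)).clm_apply (hyd t)
  have hx'' : ∀ t, HasDerivAt (deriv x)
      (NormedSpace.exp (t • D) (D ((D + A) (y t)) + (D + A) (A (y t)))) t := by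
    intro t
    have hdf : deriv x = fun s => NormedSpace.exp (s • D) ((D + A) (y s)) :=
      funext hderivx
    rw [hdf]
    exact hasDerivAt_expE D (hzd t)
  have hy0 : y 0 = a := exp_zero_apply A a
  have hce : ∀ z : E3, cross3 e z = -(D z) := by
    intro z
    rw [hD, ContinuousLinearMap.neg_apply, neg_neg, skewCLM_apply]
  constructor
  · -- x 0 = a
    rw [hxdef 0, exp_zero_apply, exp_zero_apply]
  constructor
  · -- deriv x 0 = v
    rw [hderivx 0, exp_zero_apply, hy0]
    have hDa : D a = -(cross3 e a) := by rw [hce, neg_neg]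
    have hAa : A a = cross3 (cross3 a v) a + cross3 e a := by
      rw [hA, skewCLM_apply]
      exact cross3_add_left (cross3 a v) e a
    rw [ContinuousLinearMap.add_apply, hDa, hAa, cross3_cross3_cancel]
    have haa : ⟪a, a⟫ = (1 : ℝ) := by
      rw [real_inner_self_eq_norm_sq, ha]; norm_num
    have hav : ⟪a, v⟫ = 0 := by rw [real_inner_comm]; exact hva
    rw [haa, hav]
    simp
  constructor
  · -- norm
    intro t
    have hCD : ∀ z : E3, ⟪D z, z⟫ = 0 := by
      intro z
      rw [hD, ContinuousLinearMap.neg_apply, skewCLM_apply, inner_neg_left,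
        inner_cross3_right, neg_zero]
    have hCA : ∀ z : E3, ⟪A z, z⟫ = 0 := by
      intro z
      rw [hA, skewCLM_apply]; exact inner_cross3_right ω z
    rw [hxdef t, norm_exp_skewlike D hCD, norm_exp_skewlike A hCA, ha]
  · -- Euler–Lagrange
    intro t
    have comm : ∀ z : E3, D (NormedSpace.exp (t • D) z)
        = NormedSpace.exp (t • D) (D z) := fun z => (exp_apply_comm D t z).symm
    have hdd : deriv (deriv x) t
        = NormedSpace.exp (t • D) (D ((D + A) (y t)) + (D + A) (A (y t))) :=
      (hx'' t).deriv
    have e2 : (2 : ℝ) • cross3 e (deriv x t)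
        = NormedSpace.exp (t • D) (-((2 : ℝ) • D ((D + A) (y t)))) := by
      rw [hderivx t, hce, comm, map_neg, map_smul, smul_neg]
    have e3 : cross3 e (cross3 e (x t))
        = NormedSpace.exp (t • D) (D (D (y t))) := by
      rw [hxdef t, hce, hce, map_neg, neg_neg, comm, comm]
    have e4 : ‖ω‖ ^ 2 • x t = NormedSpace.exp (t • D) (‖ω‖ ^ 2 • y t) := by
      rw [hxdef t, map_smul]
    rw [hdd, e2, e3, e4, ← map_add, ← map_add, ← map_add]
    have hcollapse : D ((D + A) (y t)) + (D + A) (A (y t)) + -((2 : ℝ) • D ((D + A) (y t)))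
        + D (D (y t)) + ‖ω‖ ^ 2 • y t = A (A (y t)) + ‖ω‖ ^ 2 • y t := by
      simp only [ContinuousLinearMap.add_apply, map_add, smul_add, two_smul, neg_add]
      abel
    rw [hcollapse]
    have key : A (A (y t)) + ‖ω‖ ^ 2 • y t
        = NormedSpace.exp (t • A) (A (A a) + ‖ω‖ ^ 2 • a) := by
      rw [map_add, map_smul]
      congr 1
      rw [hy]
      simp only [← exp_apply_comm]
    have hzero : A (A a) + ‖ω‖ ^ 2 • a = 0 := by
      rw [hA, skewCLM_apply, skewCLM_apply, cross3_cross3_self, hωa,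
        real_inner_self_eq_norm_sq]
      simp
    rw [key, hzero, map_zero, map_zero]
end
end

section
/- Let a, e, 𝛚 ∈ ℝ³ with ⟨e,a⟩ = 0, 𝛚 ≠ 0, ⟨𝛚,a⟩ = 0, and ⟨𝛚, a × e⟩ ≠ 0. Then for t ∈ ℝ, the point exp(t[𝛚]×) a lies on the great circle Γ = {x : ⟨e,x⟩ = 0} if and only if sin(t|𝛚|) = 0, i.e. if and only if t|𝛚| ∈ πℤ. -/
noncomputable section

open scoped RealInnerProductSpace

instance : IsScalarTower ℝ (E3 →L[ℝ] E3) (E3 →L[ℝ] E3) :=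
  ⟨fun c f g => by ext x; simp [smul_eq_mul, ContinuousLinearMap.mul_apply]⟩
instance : SMulCommClass ℝ (E3 →L[ℝ] E3) (E3 →L[ℝ] E3) :=
  ⟨fun c f g => by ext x; simp [smul_eq_mul, ContinuousLinearMap.mul_apply]⟩

lemma cross3_i (u v : E3) (i : Fin 3) :
    cross3 u v i = ![u 1 * v 2 - u 2 * v 1, u 2 * v 0 - u 0 * v 2, u 0 * v 1 - u 1 * v 0] i := rfl

lemma inner3 (u v : E3) : ⟪u, v⟫ = u 0 * v 0 + u 1 * v 1 + u 2 * v 2 := by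
  simp [PiLp.inner_apply, Fin.sum_univ_three]; ring

lemma myCrossCross (u a : E3) (h : ⟪u, a⟫ = 0) :
    cross3 u (cross3 u a) = -(‖u‖ ^ 2) • a := by
  have hn : ‖u‖ ^ 2 = ⟪u, u⟫ := (real_inner_self_eq_norm_sq u).symm
  rw [inner3] at h hn
  ext i
  fin_cases i <;> simp [cross3_i, hn]
  · linear_combination (u 0) * h
  · linear_combination (u 1) * h
  · linear_combination (u 2) * h

lemma triple (e u a : E3) : ⟪e, cross3 u a⟫ = ⟪u, cross3 a e⟫ := by
  rw [inner3, inner3]; simp [cross3_i]; ring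

lemma skew_pow (ω a : E3) (hωa : ⟪ω, a⟫ = 0) (m : ℕ) :
    ((skewCLM ω) ^ (2 * m)) a = ((-(‖ω‖ ^ 2)) ^ m) • a ∧
      ((skewCLM ω) ^ (2 * m + 1)) a = ((-(‖ω‖ ^ 2)) ^ m) • cross3 ω a := by
  induction m with
  | zero => simp [skew_apply]
  | succ m ih =>
    obtain ⟨h1, h2⟩ := ih
    have key : (skewCLM ω) (cross3 ω a) = -(‖ω‖ ^ 2) • a := by
      rw [skew_apply]; exact myCrossCross ω a hωa
    have e1 : ((skewCLM ω) ^ (2 * (m + 1))) a = ((-(‖ω‖ ^ 2)) ^ (m + 1)) • a := by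
      have : 2 * (m + 1) = (2 * m + 1) + 1 := by ring
      rw [this, pow_succ', ContinuousLinearMap.mul_apply, h2, map_smul, key,
        smul_smul, ← pow_succ]
    refine ⟨e1, ?_⟩
    rw [pow_succ', ContinuousLinearMap.mul_apply, e1, map_smul, skew_apply]

set_option synthInstance.maxHeartbeats 1000000 in
set_option maxHeartbeats 1000000 in
/-- The point `exp(t[𝛚]×) a` lies on the great circle `Γ = {x : ⟨e,x⟩ = 0}` if and only if
`sin(t‖𝛚‖) = 0`, i.e. if and only if `t‖𝛚‖ ∈ πℤ`. -/
theorem crosses_equator_iff (a e ω : E3) (hea : ⟪e, a⟫ = 0) (hω : ω ≠ 0)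
    (hωa : ⟪ω, a⟫ = 0) (hωae : ⟪ω, cross3 a e⟫ ≠ 0) (t : ℝ) :
    (⟪e, rot ω t a⟫ = 0 ↔ Real.sin (t * ‖ω‖) = 0) ∧
      (Real.sin (t * ‖ω‖) = 0 ↔ ∃ m : ℤ, t * ‖ω‖ = m * Real.pi) := by
  have hn : ‖ω‖ ≠ 0 := norm_ne_zero_iff.mpr hω
  set K : ℝ := ⟪e, cross3 ω a⟫ with hK
  have hKne : K ≠ 0 := by rw [hK, triple]; exact hωae
  -- the series for ⟪e, exp(t•A) a⟫
  have h1 : HasSum (fun n : ℕ => ((n.factorial : ℝ))⁻¹ • (t • skewCLM ω) ^ n)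
      (NormedSpace.exp (t • skewCLM ω)) := NormedSpace.exp_series_hasSum_exp' _
  have h2 : HasSum (fun n : ℕ => ⟪e, (((n.factorial : ℝ))⁻¹ • (t • skewCLM ω) ^ n) a⟫)
      ⟪e, rot ω t a⟫ :=
    ((h1.mapL (ContinuousLinearMap.apply ℝ E3 a)).mapL (innerSL ℝ e))
  have hterm : ∀ n : ℕ, ⟪e, (((n.factorial : ℝ))⁻¹ • (t • skewCLM ω) ^ n) a⟫
      = ((n.factorial : ℝ))⁻¹ * t ^ n * ⟪e, ((skewCLM ω) ^ n) a⟫ := by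
    intro n
    rw [smul_pow, ContinuousLinearMap.smul_apply, ContinuousLinearMap.smul_apply,
      real_inner_smul_right, real_inner_smul_right]
    ring
  -- closed form for the sum
  have h3 : HasSum (fun n : ℕ => ((n.factorial : ℝ))⁻¹ * t ^ n * ⟪e, ((skewCLM ω) ^ n) a⟫)
      ((K / ‖ω‖) * Real.sin (t * ‖ω‖)) := by
    have heven : HasSum (fun m : ℕ =>
        ((((2 * m).factorial : ℝ))⁻¹ * t ^ (2 * m) * ⟪e, ((skewCLM ω) ^ (2 * m)) a⟫)) 0 := by
      have : (fun m : ℕ =>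
          ((((2 * m).factorial : ℝ))⁻¹ * t ^ (2 * m) * ⟪e, ((skewCLM ω) ^ (2 * m)) a⟫))
          = fun _ => (0 : ℝ) := by
        funext m
        rw [(skew_pow ω a hωa m).1, real_inner_smul_right, hea]
        ring
      rw [this]; exact hasSum_zero
    have hodd : HasSum (fun m : ℕ =>
        ((((2 * m + 1).factorial : ℝ))⁻¹ * t ^ (2 * m + 1) * ⟪e, ((skewCLM ω) ^ (2 * m + 1)) a⟫))
        ((K / ‖ω‖) * Real.sin (t * ‖ω‖)) := by
      have hs := (Real.hasSum_sin (t * ‖ω‖)).mul_left (K / ‖ω‖)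
      convert hs using 1
      · rfl
      funext m
      rw [(skew_pow ω a hωa m).2, real_inner_smul_right, ← hK]
      have hpow : (-(‖ω‖ ^ 2)) ^ m = (-1 : ℝ) ^ m * ‖ω‖ ^ (2 * m) := by
        rw [neg_pow, pow_mul]
      rw [hpow, mul_pow]
      have h2m : ((2 * m + 1).factorial : ℝ) ≠ 0 := Nat.cast_ne_zero.mpr (Nat.factorial_ne_zero _)
      field_simp
      ring
    have := HasSum.even_add_odd (f := fun n : ℕ => ((n.factorial : ℝ))⁻¹ * t ^ n * ⟪e, ((skewCLM ω) ^ n) a⟫) heven hodd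
    rwa [zero_add] at this
  have hmain : ⟪e, rot ω t a⟫ = (K / ‖ω‖) * Real.sin (t * ‖ω‖) := by
    have h2' : HasSum (fun n : ℕ => ((n.factorial : ℝ))⁻¹ * t ^ n * ⟪e, ((skewCLM ω) ^ n) a⟫)
        ⟪e, rot ω t a⟫ := by
      have := h2
      simp_rw [hterm] at this
      exact this
    exact h2'.unique h3
  constructor
  · rw [hmain]
    constructor
    · intro h
      rcases mul_eq_zero.mp h with h | h
      · exact absurd h (div_ne_zero hKne hn)
      · exact h
    · intro h; rw [h, mul_zero]
  · rw [Real.sin_eq_zero_iff]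
    constructor
    · rintro ⟨n, hn⟩; exact ⟨n, hn.symm⟩
    · rintro ⟨n, hn⟩; exact ⟨n, hn.symm⟩
end
end

section
/- Let a, e, 𝛚 ∈ ℝ³ with |a| = |e| = 1, ⟨a,e⟩ = 0 and ⟨𝛚,a⟩ = 0. Set h = ½|𝛚|² − ⟨𝛚,e⟩, v = (𝛚 − e) × a and j = e × a. Then |v|² = 2h + 1 and ⟨v, j⟩ = ⟨𝛚,e⟩ − 1 = ½|𝛚|² − h − 1. Consequently, when 2h+1 > 0, the angle α between the initial velocity v and the equator direction j satisfies cos α = (|𝛚|²/2 − h − 1)/√(2h+1). -/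
/-! Cross product with a unit vector `a` is, by the Lagrange identity, an isometry of the plane
`a⊥`. Since `ω - e` and `e` lie in that plane, `v` and `j` have the lengths and mutual inner product
of `ω - e` and `e`, and everything follows from `‖ω - e‖² = ‖ω‖² - 2⟪ω, e⟫ + 1`. -/

noncomputable section

open scoped RealInnerProductSpace

lemma real_inner_eq_dotProduct {ι : Type*} [Fintype ι] (x y : EuclideanSpace ℝ ι) :
    ⟪x, y⟫ = WithLp.equiv 2 _ x ⬝ᵥ WithLp.equiv 2 _ y := by
  rw [EuclideanSpace.inner_eq_star_dotProduct, star_trivial, dotProduct_comm]; rfl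

lemma inner_cross3_cross3 (u v x y : E3) :
    ⟪cross3 u v, cross3 x y⟫ = ⟪u, x⟫ * ⟪v, y⟫ - ⟪u, y⟫ * ⟪v, x⟫ := by
  simp only [real_inner_eq_dotProduct, cross3, Equiv.apply_symm_apply]
  exact cross_dot_cross _ _ _ _

lemma inner_cross3_cross3_of_inner_eq_zero {a x y : E3} (ha : ‖a‖ = 1) (hy : ⟪y, a⟫ = 0) :
    ⟪cross3 x a, cross3 y a⟫ = ⟪x, y⟫ := by
  rw [inner_cross3_cross3, real_inner_self_eq_norm_sq, ha, real_inner_comm y a, hy]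
  ring

lemma norm_cross3_of_inner_eq_zero {a x : E3} (ha : ‖a‖ = 1) (hx : ⟪x, a⟫ = 0) :
    ‖cross3 x a‖ = ‖x‖ := by
  rw [norm_eq_sqrt_real_inner, inner_cross3_cross3_of_inner_eq_zero ha hx,
    ← norm_eq_sqrt_real_inner]

open InnerProductGeometry in
/-- With `h = ½‖𝛚‖² − ⟨𝛚,e⟩`, `v = (𝛚 − e) × a` and `j = e × a`, one has `‖v‖² = 2h + 1` and
`⟨v,j⟩ = ⟨𝛚,e⟩ − 1 = ½‖𝛚‖² − h − 1`; consequently, when `2h + 1 > 0`, the angle `α` between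
the initial velocity `v` and the equator direction `j` satisfies
`cos α = (‖𝛚‖²/2 − h − 1)/√(2h+1)`. -/
theorem inclination_cosine (a e ω : E3) (ha : ‖a‖ = 1) (he : ‖e‖ = 1)
    (hae : ⟪a, e⟫ = 0) (hωa : ⟪ω, a⟫ = 0) :
    let h : ℝ := (1 / 2) * ‖ω‖ ^ 2 - ⟪ω, e⟫
    let v : E3 := cross3 (ω - e) a
    let j : E3 := cross3 e a
    ‖v‖ ^ 2 = 2 * h + 1 ∧ ⟪v, j⟫ = ⟪ω, e⟫ - 1 ∧ ⟪v, j⟫ = ‖ω‖ ^ 2 / 2 - h - 1 ∧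
      (0 < 2 * h + 1 →
        Real.cos (angle v j) = (‖ω‖ ^ 2 / 2 - h - 1) / Real.sqrt (2 * h + 1)) := by
  intro h v j
  have hea : ⟪e, a⟫ = 0 := by rwa [real_inner_comm]
  have hva : ⟪ω - e, a⟫ = 0 := by rw [inner_sub_left, hωa, hea, sub_zero]
  have hv : ‖v‖ ^ 2 = 2 * h + 1 := by
    rw [norm_cross3_of_inner_eq_zero ha hva, norm_sub_sq_real, he]
    ring
  have hvj : ⟪v, j⟫ = ⟪ω, e⟫ - 1 := by
    rw [inner_cross3_cross3_of_inner_eq_zero ha hea, inner_sub_left, real_inner_self_eq_norm_sq,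
      he, one_pow]
  have hvj' : ⟪v, j⟫ = ‖ω‖ ^ 2 / 2 - h - 1 := by
    rw [hvj]
    ring
  refine ⟨hv, hvj, hvj', fun _ => ?_⟩
  rw [cos_angle, hvj', norm_cross3_of_inner_eq_zero ha hea, he, mul_one, ← hv,
    Real.sqrt_sq (norm_nonneg v)]
end
end

section
/- Let a, e ∈ ℝ³ with |a| = |e| = 1 and ⟨a,e⟩ = 0, and let 𝛚₁, 𝛚₂ ∈ ℝ³ with ⟨𝛚₁,a⟩ = ⟨𝛚₂,a⟩ = 0, equal Jacobi constants ½|𝛚₁|² − ⟨𝛚₁,e⟩ = ½|𝛚₂|² − ⟨𝛚₂,e⟩, and |𝛚₁| ≠ |𝛚₂|. Then, with vᵢ = (𝛚ᵢ − e) × a and j = e × a, one has ⟨v₁, j⟩ ≠ ⟨v₂, j⟩; in particular v₁ ≠ v₂, i.e. collision orbits of the same energy with different rotation numbers leave the collision point a in different directions (changing direction condition). -/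
noncomputable section

open scoped RealInnerProductSpace

lemma cross3_inner (u v w x : E3) :
    ⟪cross3 u v, cross3 w x⟫ = ⟪u, w⟫ * ⟪v, x⟫ - ⟪u, x⟫ * ⟪v, w⟫ := by
  simp only [cross3, PiLp.inner_apply, RCLike.inner_apply, starRingEnd_apply, star_trivial,
    Fin.sum_univ_three, WithLp.equiv_symm_apply, WithLp.ofLp_toLp, WithLp.equiv_apply, cross_apply,
    Matrix.cons_val_zero, Matrix.cons_val_one, Matrix.head_cons, Matrix.cons_val_two,
    Matrix.tail_cons]
  ring

/-- Changing direction condition: collision orbits of the same Jacobi constant with different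
rotation numbers `‖𝛚₁‖ ≠ ‖𝛚₂‖` leave the collision point `a` in different directions:
with `vᵢ = (𝛚ᵢ − e) × a` and `j = e × a`, one has `⟨v₁,j⟩ ≠ ⟨v₂,j⟩`, in particular `v₁ ≠ v₂`. -/
theorem changing_direction (a e ω₁ ω₂ : E3) (ha : ‖a‖ = 1) (he : ‖e‖ = 1)
    (hae : ⟪a, e⟫ = 0) (hω₁ : ⟪ω₁, a⟫ = 0) (hω₂ : ⟪ω₂, a⟫ = 0)
    (henergy : (1 / 2) * ‖ω₁‖ ^ 2 - ⟪ω₁, e⟫ = (1 / 2) * ‖ω₂‖ ^ 2 - ⟪ω₂, e⟫)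
    (hnorm : ‖ω₁‖ ≠ ‖ω₂‖) :
    ⟪cross3 (ω₁ - e) a, cross3 e a⟫ ≠ ⟪cross3 (ω₂ - e) a, cross3 e a⟫ ∧
      cross3 (ω₁ - e) a ≠ cross3 (ω₂ - e) a := by
  have ha2 : ⟪a, a⟫ = (1:ℝ) := by
    rw [real_inner_self_eq_norm_sq, ha]; norm_num
  have hea : ⟪e, a⟫ = 0 := by rw [real_inner_comm]; exact hae
  have key : ∀ ω : E3, ⟪ω, a⟫ = 0 →
      ⟪cross3 (ω - e) a, cross3 e a⟫ = ⟪ω, e⟫ - 1 := by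
    intro ω hω
    rw [cross3_inner, inner_sub_left, inner_sub_left, hω,
      real_inner_self_eq_norm_sq, he, ha2, hea]
    ring
  have hdiff : ⟪ω₁, e⟫ ≠ ⟪ω₂, e⟫ := by
    intro h
    apply hnorm
    have h2 : ‖ω₁‖ ^ 2 = ‖ω₂‖ ^ 2 := by nlinarith [henergy, h]
    rw [← Real.sqrt_sq (norm_nonneg ω₁), ← Real.sqrt_sq (norm_nonneg ω₂), h2]
  have hne : ⟪cross3 (ω₁ - e) a, cross3 e a⟫ ≠ ⟪cross3 (ω₂ - e) a, cross3 e a⟫ := by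
    rw [key ω₁ hω₁, key ω₂ hω₂]
    intro h; apply hdiff; linarith
  exact ⟨hne, fun h => hne (by rw [h])⟩
end
end
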